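/- Let A be a strongly Γ-graded ring with grading 𝒜 and let A₀ = 𝒜 0 be its degree-zero subring. For every γ ∈ Γ, the homogeneous component 𝒜 γ, regarded as a left A₀-module via multiplication in A, is a finitely generated projective A₀-module. -/

import Mathlib

/-- The additive subgroup generated by the set of products `{x * y : x ∈ 𝒜 γ, y ∈ 𝒜 δ}`. -/
def gradedMulSubgroup {Γ : Type*} [AddCommGroup Γ] {A : Type*} [Ring A]
    (𝒜 : Γ → AddSubgroup A) (γ δ : Γ) : AddSubgroup A :=
  AddSubgroup.closure {z : A | ∃ x ∈ 𝒜 γ, ∃ y ∈ 𝒜 δ, z = x * y}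

/-- A `Γ`-graded ring is strongly graded when `𝒜 γ · 𝒜 δ = 𝒜 (γ + δ)` for all `γ, δ`. -/
def IsStronglyGraded {Γ : Type*} [AddCommGroup Γ] {A : Type*} [Ring A]
    (𝒜 : Γ → AddSubgroup A) : Prop :=
  ∀ γ δ : Γ, gradedMulSubgroup 𝒜 γ δ = 𝒜 (γ + δ)

section

variable {Γ : Type*} [AddCommGroup Γ] [DecidableEq Γ] {A : Type*} [Ring A]
  (𝒜 : Γ → AddSubgroup A) [GradedRing 𝒜]

/-- Each homogeneous component `𝒜 γ` carries a scalar multiplication by the degree-zero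
subring `𝒜 0`, given by multiplication in `A`. -/
instance gradeZeroSMulComponent (γ : Γ) : SMul ↥(𝒜 0) ↥(𝒜 γ) where
  smul a x := ⟨(a : A) * (x : A), by
    have h := SetLike.mul_mem_graded a.2 x.2
    rwa [zero_add] at h⟩

/-- Each homogeneous component `𝒜 γ` is a left module over the degree-zero
subring `𝒜 0`, the action being multiplication in `A`. -/
instance gradeZeroModuleComponent (γ : Γ) : Module ↥(𝒜 0) ↥(𝒜 γ) where
  smul := (· • ·)
  one_smul x := Subtype.ext (one_mul (x : A))
  mul_smul a b x := Subtype.ext (mul_assoc (a : A) (b : A) (x : A))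
  smul_zero a := Subtype.ext (mul_zero (a : A))
  smul_add a x y := Subtype.ext (mul_add (a : A) (x : A) (y : A))
  add_smul a b x := Subtype.ext (add_mul (a : A) (b : A) (x : A))
  zero_smul x := Subtype.ext (zero_mul (x : A))

/-- In a strongly graded ring, each homogeneous component `𝒜 γ`, viewed as a
left module over the degree-zero subring `A₀ = 𝒜 0` via multiplication in `A`, is a finitely
generated projective `A₀`-module. -/
theorem component_finite_projective_of_isStronglyGraded
    (hstrong : IsStronglyGraded 𝒜) (γ : Γ) :
    Module.Finite ↥(𝒜 0) ↥(𝒜 γ) ∧ Module.Projective ↥(𝒜 0) ↥(𝒜 γ) := by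
  classical
  -- Step 1 : write `1` as a finite sum `∑ u i * v i` with `u i ∈ 𝒜 (-γ)`, `v i ∈ 𝒜 γ`.
  have h1 : (1 : A) ∈ gradedMulSubgroup 𝒜 (-γ) γ := by
    rw [hstrong (-γ) γ, neg_add_cancel]
    exact SetLike.one_mem_graded 𝒜
  set S : Set A := {z : A | ∃ x ∈ 𝒜 (-γ), ∃ y ∈ 𝒜 γ, z = x * y} with hS
  have hSneg : ∀ z ∈ S, -z ∈ S := by
    rintro z ⟨x, hx, y, hy, rfl⟩
    exact ⟨-x, neg_mem hx, y, hy, (neg_mul x y).symm⟩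
  have h1' : (1 : A) ∈ AddSubmonoid.closure S := by
    have h1'' : (1 : A) ∈ (AddSubgroup.closure S).toAddSubmonoid := h1
    rw [AddSubgroup.closure_toAddSubmonoid] at h1''
    refine AddSubmonoid.closure_mono ?_ h1''
    rintro z (hz | hz)
    · exact hz
    · have := hSneg (-z) hz
      rwa [neg_neg] at this
  obtain ⟨l, hl, hlsum⟩ := AddSubmonoid.exists_list_of_mem_closure h1'
  have key : ∀ l' : List A, (∀ z ∈ l', z ∈ S) →
      ∃ (n : ℕ) (u v : Fin n → A), (∀ i, u i ∈ 𝒜 (-γ)) ∧ (∀ i, v i ∈ 𝒜 γ) ∧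
        ∑ i, u i * v i = l'.sum := by
    intro l' hl'
    induction l' with
    | nil => exact ⟨0, ![], ![], by simp, by simp, by simp⟩
    | cons a t ih =>
      obtain ⟨x, hx, y, hy, rfl⟩ := hl' a List.mem_cons_self
      obtain ⟨n, u, v, hu, hv, hsum⟩ := ih (fun z hz => hl' z (List.mem_cons_of_mem _ hz))
      refine ⟨n + 1, Fin.cons x u, Fin.cons y v, ?_, ?_, ?_⟩
      · exact Fin.cases hx hu
      · exact Fin.cases hy hv
      · simp only [List.sum_cons, ← hsum]
        rw [Fin.sum_univ_succ]
        simp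
  obtain ⟨n, u, v, hu, hv, hsum⟩ := key l hl
  rw [hlsum] at hsum
  -- Step 2 : build the splitting maps.
  let V : Fin n → ↥(𝒜 γ) := fun i => ⟨v i, hv i⟩
  let π : (Fin n → ↥(𝒜 0)) →ₗ[↥(𝒜 0)] ↥(𝒜 γ) :=
    { toFun := fun c => ∑ i, c i • V i
      map_add' := by
        intro c c'
        rw [← Finset.sum_add_distrib]
        exact Finset.sum_congr rfl fun i _ => add_smul (c i) (c' i) (V i)
      map_smul' := by
        intro a c
        simp only [RingHom.id_apply, Finset.smul_sum, Pi.smul_apply, smul_eq_mul]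
        exact Finset.sum_congr rfl fun i _ => mul_smul a (c i) (V i) }
  have hmem : ∀ (m : ↥(𝒜 γ)) (i : Fin n), (m : A) * u i ∈ 𝒜 0 := by
    intro m i
    have h := SetLike.mul_mem_graded m.2 (hu i)
    rwa [add_neg_cancel] at h
  let s : ↥(𝒜 γ) →ₗ[↥(𝒜 0)] (Fin n → ↥(𝒜 0)) :=
    { toFun := fun m i => ⟨(m : A) * u i, hmem m i⟩
      map_add' := by
        intro m m'
        funext i
        exact Subtype.ext (add_mul (m : A) (m' : A) (u i))
      map_smul' := by
        intro a m
        funext i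
        exact Subtype.ext (mul_assoc (a : A) (m : A) (u i)) }
  have hsplit : ∀ m : ↥(𝒜 γ), π (s m) = m := by
    intro m
    apply Subtype.ext
    have : ((∑ i, (s m) i • V i : ↥(𝒜 γ)) : A) = ∑ i, ((m : A) * u i) * v i := by
      rw [AddSubgroup.val_finset_sum]
      exact Finset.sum_congr rfl fun i _ => rfl
    show ((∑ i, (s m) i • V i : ↥(𝒜 γ)) : A) = (m : A)
    rw [this]
    calc ∑ i, ((m : A) * u i) * v i = (m : A) * ∑ i, u i * v i := by
          rw [Finset.mul_sum]; exact Finset.sum_congr rfl fun i _ => mul_assoc _ _ _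
      _ = (m : A) := by rw [hsum, mul_one]
  have hcomp : π.comp s = LinearMap.id := LinearMap.ext hsplit
  have hsurj : Function.Surjective π := fun m => ⟨s m, hsplit m⟩
  exact ⟨Module.Finite.of_surjective π hsurj, Module.Projective.of_split s π hcomp⟩

end
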